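/- arXiv:2410.14554 — 3 statements merged into one kernel-verified Lean document; each statement's English description precedes it below -/
import Mathlib

section
/- Let M be an n×n matrix over a commutative ring and let B be the 2n×2n block matrix with blocks [[0, M],[-Mᵀ, 0]]. Then B is skew-symmetric and pff(B) = (-1)^{n(n-1)/2} · det(M). -/
open Matrix

def pairFst {n : ℕ} (k : Fin n) : Fin (2 * n) := ⟨2 * k.val, by have := k.isLt; omega⟩
def pairSnd {n : ℕ} (k : Fin n) : Fin (2 * n) := ⟨2 * k.val + 1, by have := k.isLt; omega⟩

/-- A permutation of `Fin (2n)` is pair-normalized if it lists a partition of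
`{1,…,2n}` into pairs `{i₁,j₁},…,{iₙ,jₙ}` with `i₁ < i₂ < ⋯ < iₙ` and `iₖ < jₖ`. -/
def IsPairNormal {n : ℕ} (σ : Equiv.Perm (Fin (2 * n))) : Prop :=
  (∀ k : Fin n, σ (pairFst k) < σ (pairSnd k)) ∧
    ∀ k l : Fin n, k < l → σ (pairFst k) < σ (pairFst l)

instance {n : ℕ} (σ : Equiv.Perm (Fin (2 * n))) : Decidable (IsPairNormal σ) := by
  unfold IsPairNormal; infer_instance

/-- The Pfaffian of a `2n × 2n` matrix: the signed sum over pair partitions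
`P = {{i₁,j₁},…,{iₙ,jₙ}}` of `sgn σ_P · a_{i₁j₁} ⋯ a_{iₙjₙ}`. -/
noncomputable def Matrix.pff {R : Type*} [CommRing R] {n : ℕ}
    (A : Matrix (Fin (2 * n)) (Fin (2 * n)) R) : R :=
  ∑ σ ∈ Finset.univ.filter (fun σ : Equiv.Perm (Fin (2 * n)) => IsPairNormal σ),
    (Equiv.Perm.sign σ : ℤ) • ∏ k : Fin n, A (σ (pairFst k)) (σ (pairSnd k))

/-- The canonical equivalence `Fin n ⊕ Fin n ≃ Fin (2n)`. -/
def sumEquiv (n : ℕ) : (Fin n ⊕ Fin n) ≃ Fin (2 * n) :=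
  finSumFinEquiv.trans (finCongr (two_mul n).symm)

/- Since the diagonal blocks vanish, only pair partitions matching each index of the first half
with one of the second half contribute. Listed in pair-normal order these are exactly the
permutations `2k ↦ k, 2k+1 ↦ n + π k` for `π` a permutation of `Fin n`: the perfect shuffle
`2k ↦ k, 2k+1 ↦ n + k` composed with `π` acting on the second half. Such a term equals
`sgn π ∏ M k (π k)` times the sign of the shuffle, which is `(-1)^{n(n-1)/2}` because the shuffle
is the product of the cycles `(m m+1 … 2m)`, `m < n`. -/

open Equiv

lemma sumEquiv_inl_val {n : ℕ} (i : Fin n) : (sumEquiv n (Sum.inl i)).val = i.val := by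
  simp [sumEquiv]

lemma sumEquiv_inr_val {n : ℕ} (i : Fin n) : (sumEquiv n (Sum.inr i)).val = n + i.val := by
  simp [sumEquiv, add_comm]

noncomputable def interleaveEquiv (n : ℕ) : Fin n ⊕ Fin n ≃ Fin (2 * n) :=
  Equiv.ofBijective (Sum.elim pairFst pairSnd) <|
    (Fintype.bijective_iff_injective_and_card _).2
      ⟨Function.Injective.sumElim (fun k l h => by simpa [pairFst, Fin.ext_iff] using h)
        (fun k l h => by simpa [pairSnd, Fin.ext_iff] using h)
        (fun k l h => by simp [pairFst, pairSnd, Fin.ext_iff] at h; omega),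
        by simp [two_mul]⟩

@[simp] lemma interleaveEquiv_inl {n : ℕ} (k : Fin n) :
    interleaveEquiv n (Sum.inl k) = pairFst k :=
  rfl

@[simp] lemma interleaveEquiv_inr {n : ℕ} (k : Fin n) :
    interleaveEquiv n (Sum.inr k) = pairSnd k :=
  rfl

lemma Fin.val_cycleIcc {N : ℕ} (i j k : Fin N) :
    (Fin.cycleIcc i j k).val = if k < i ∨ j < k then k.val else if k = j then i.val else k + 1 := by
  have : NeZero N := ⟨by have := k.isLt; omega⟩
  rcases lt_or_ge k i with hki | hik
  · simp [Fin.cycleIcc_of_lt hki, hki]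
  rcases lt_or_ge j k with hjk | hkj
  · simp [Fin.cycleIcc_of_gt hjk, hjk]
  rw [Fin.cycleIcc_of_le_of_le hik hkj, if_neg (not_or.2 ⟨hik.not_gt, hkj.not_gt⟩)]
  split_ifs with hk
  · rfl
  · have hkj' : k.val < j.val := lt_of_le_of_ne hkj (Fin.val_ne_of_ne hk)
    exact Fin.val_add_one_of_lt' (by omega)

noncomputable def partialShuffle {N : ℕ} (m : ℕ) (hm : 2 * m ≤ N) : Perm (Fin N) :=
  Equiv.ofBijective
    (fun x => ⟨if x.val < 2 * m then (if x.val % 2 = 0 then x.val / 2 else m + x.val / 2)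
      else x.val, by split_ifs <;> omega⟩)
    (Finite.injective_iff_bijective.1 fun x y h => by
      simp only [Fin.mk.injEq] at h
      ext
      split_ifs at h <;> omega)

lemma partialShuffle_val {N m : ℕ} (hm : 2 * m ≤ N) (x : Fin N) :
    (partialShuffle m hm x).val =
      if x.val < 2 * m then (if x.val % 2 = 0 then x.val / 2 else m + x.val / 2) else x.val :=
  rfl

lemma partialShuffle_zero {N : ℕ} : partialShuffle 0 (Nat.zero_le N) = 1 := by
  ext x
  simp [partialShuffle_val]

lemma partialShuffle_succ {N m : ℕ} (hm : 2 * (m + 1) ≤ N) :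
    partialShuffle (m + 1) hm =
      Fin.cycleIcc ⟨m, by omega⟩ ⟨2 * m, by omega⟩ * partialShuffle m (by omega) := by
  ext x
  rw [Perm.mul_apply, Fin.val_cycleIcc]
  simp only [Fin.lt_def, Fin.ext_iff, partialShuffle_val]
  split_ifs <;> omega

lemma sign_partialShuffle {N m : ℕ} (hm : 2 * m ≤ N) :
    Perm.sign (partialShuffle m hm) = (-1) ^ (m * (m - 1) / 2) := by
  induction m with
  | zero => simp [partialShuffle_zero]
  | succ m ih =>
    rw [partialShuffle_succ, Perm.sign_mul, Fin.sign_cycleIcc_of_le (Fin.mk_le_mk.2 (by omega)),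
      Fin.val_mk, Fin.val_mk, show 2 * m - m = m by omega, ih, Nat.triangle_succ, pow_add, mul_comm]

lemma sign_perfectShuffle (n : ℕ) :
    Perm.sign ((interleaveEquiv n).symm.trans (sumEquiv n)) = (-1) ^ (n * (n - 1) / 2) := by
  have : (interleaveEquiv n).symm.trans (sumEquiv n) = partialShuffle n le_rfl := by
    ext x
    obtain ⟨k | k, rfl⟩ := (interleaveEquiv n).surjective x <;>
      rw [Equiv.trans_apply, Equiv.symm_apply_apply] <;>
      simp only [partialShuffle_val, sumEquiv_inl_val, sumEquiv_inr_val, interleaveEquiv_inl,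
        interleaveEquiv_inr, pairFst, pairSnd] <;>
      split_ifs <;> omega
  rw [this, sign_partialShuffle]

noncomputable def blockPairing {n : ℕ} (π : Perm (Fin n)) : Perm (Fin (2 * n)) :=
  (interleaveEquiv n).symm.trans ((sumCongr (Equiv.refl _) π).trans (sumEquiv n))

@[simp] lemma blockPairing_pairFst {n : ℕ} (π : Perm (Fin n)) (k : Fin n) :
    blockPairing π (pairFst k) = sumEquiv n (Sum.inl k) := by
  simp [blockPairing, ← interleaveEquiv_inl]

@[simp] lemma blockPairing_pairSnd {n : ℕ} (π : Perm (Fin n)) (k : Fin n) :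
    blockPairing π (pairSnd k) = sumEquiv n (Sum.inr (π k)) := by
  simp [blockPairing, ← interleaveEquiv_inr]

lemma sign_blockPairing {n : ℕ} (π : Perm (Fin n)) :
    Perm.sign (blockPairing π) = (-1) ^ (n * (n - 1) / 2) * Perm.sign π := by
  have : blockPairing π = (interleaveEquiv n).symm.trans (sumEquiv n) *
      (interleaveEquiv n).permCongr (sumCongr (Equiv.refl _) π) := by
    ext x
    simp [blockPairing, Equiv.permCongr_apply]
  rw [this, Perm.sign_mul, sign_perfectShuffle, Perm.sign_permCongr, Perm.sign_sumCongr,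
    Perm.sign_refl, one_mul]

lemma blockPairing_injective {n : ℕ} : Function.Injective (blockPairing (n := n)) := by
  intro π π' h
  refine Equiv.ext fun k => Sum.inr.inj ((sumEquiv n).injective ?_)
  simpa only [blockPairing_pairSnd] using congrArg (fun σ => σ (pairSnd k)) h

lemma isPairNormal_blockPairing {n : ℕ} (π : Perm (Fin n)) : IsPairNormal (blockPairing π) := by
  refine ⟨fun k => ?_, fun k l hkl => ?_⟩
  · simp only [blockPairing_pairFst, blockPairing_pairSnd, Fin.lt_def, sumEquiv_inl_val,
      sumEquiv_inr_val]
    omega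
  · simpa only [blockPairing_pairFst, Fin.lt_def, sumEquiv_inl_val] using hkl

lemma exists_blockPairing_eq {n : ℕ} {σ : Perm (Fin (2 * n))} (hσ : IsPairNormal σ)
    (hsplit : ∀ k, (σ (pairFst k)).val < n ∧ n ≤ (σ (pairSnd k)).val) :
    ∃ π, blockPairing π = σ := by
  have hfst : ∀ k, σ (pairFst k) = sumEquiv n (Sum.inl k) := by
    have hmono : StrictMono fun k => (⟨σ (pairFst k), (hsplit k).1⟩ : Fin n) :=
      fun k l hkl => hσ.2 k l hkl
    exact fun k => Fin.ext (by simpa [sumEquiv_inl_val] using congrArg Fin.val hmono.apply_eq)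
  let π' : Fin n → Fin n := fun k => ⟨σ (pairSnd k) - n, by have := (σ (pairSnd k)).isLt; omega⟩
  have hsnd : ∀ k, σ (pairSnd k) = sumEquiv n (Sum.inr (π' k)) := fun k =>
    Fin.ext (by simp [sumEquiv_inr_val, π', (hsplit k).2])
  have hinj : Function.Injective π' := fun k l h =>
    Sum.inr.inj <| (interleaveEquiv n).injective <|
      σ.injective ((hsnd k).trans (h ▸ (hsnd l).symm))
  refine ⟨Equiv.ofBijective π' (Finite.injective_iff_bijective.1 hinj), Equiv.ext fun x => ?_⟩
  obtain ⟨k | k, rfl⟩ := (interleaveEquiv n).surjective x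
  · simp [hfst]
  · simp [hsnd]

open Matrix

def blockSkew {R : Type*} [Zero R] [Neg R] {n : ℕ} (M : Matrix (Fin n) (Fin n) R) :
    Matrix (Fin (2 * n)) (Fin (2 * n)) R :=
  reindex (sumEquiv n) (sumEquiv n) (fromBlocks 0 M (-Mᵀ) 0)

section BlockSkew

variable {R : Type*} {n : ℕ}

@[simp] lemma blockSkew_apply_sumEquiv [Zero R] [Neg R] (M : Matrix (Fin n) (Fin n) R)
    (x y : Fin n ⊕ Fin n) :
    blockSkew M (sumEquiv n x) (sumEquiv n y) = fromBlocks 0 M (-Mᵀ) 0 x y := by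
  simp [blockSkew]

lemma transpose_blockSkew [AddGroup R] (M : Matrix (Fin n) (Fin n) R) :
    (blockSkew M)ᵀ = -blockSkew M := by
  have h : (fromBlocks 0 M (-Mᵀ) 0)ᵀ = -fromBlocks 0 M (-Mᵀ) 0 := by
    simp [fromBlocks_transpose, fromBlocks_neg]
  rw [blockSkew, transpose_reindex, h]
  rfl

lemma blockSkew_apply_eq_zero_of_lt_iff [NegZeroClass R] (M : Matrix (Fin n) (Fin n) R)
    {i j : Fin (2 * n)} (h : i.val < n ↔ j.val < n) : blockSkew M i j = 0 := by
  obtain ⟨x, rfl⟩ := (sumEquiv n).surjective i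
  obtain ⟨y, rfl⟩ := (sumEquiv n).surjective j
  rcases x with a | a <;> rcases y with b | b <;>
    simp_all [sumEquiv_inl_val, sumEquiv_inr_val]

lemma prod_blockSkew_eq_zero_of_notMem_range [CommRing R] (M : Matrix (Fin n) (Fin n) R)
    {σ : Perm (Fin (2 * n))} (hσ : IsPairNormal σ) (hrange : σ ∉ Set.range blockPairing) :
    ∏ k, blockSkew M (σ (pairFst k)) (σ (pairSnd k)) = 0 := by
  obtain ⟨k, hk⟩ : ∃ k, ¬((σ (pairFst k)).val < n ∧ n ≤ (σ (pairSnd k)).val) := by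
    by_contra! hsplit
    exact hrange (exists_blockPairing_eq hσ hsplit)
  have hlt := Fin.lt_def.1 (hσ.1 k)
  exact Finset.prod_eq_zero (Finset.mem_univ k) (blockSkew_apply_eq_zero_of_lt_iff M (by omega))

lemma pff_blockSkew [CommRing R] (M : Matrix (Fin n) (Fin n) R) :
    (blockSkew M).pff = (-1) ^ (n * (n - 1) / 2) * M.det := by
  rw [pff, ← det_transpose, det_apply, Finset.mul_sum]
  symm
  refine Finset.sum_of_injOn blockPairing blockPairing_injective.injOn
    (fun π _ => by simp [isPairNormal_blockPairing])
    (fun σ hσ hrange => ?_) (fun π _ => ?_)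
  · rw [prod_blockSkew_eq_zero_of_notMem_range M (Finset.mem_filter.1 hσ).2 (by simpa using hrange),
      smul_zero]
  · simp only [blockPairing_pairFst, blockPairing_pairSnd, blockSkew_apply_sumEquiv,
      fromBlocks_apply₁₂, transpose_apply, sign_blockPairing, Units.smul_def, zsmul_eq_mul]
    push_cast
    ring

end BlockSkew

/-- For an `n × n` matrix `M`, the block matrix `[[0, M], [-Mᵀ, 0]]` is skew-symmetric
and its Pfaffian equals `(-1)^{n(n-1)/2} · det M`. -/
theorem pff_fromBlocks {R : Type*} [CommRing R] (n : ℕ) (M : Matrix (Fin n) (Fin n) R) :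
    ((Matrix.reindex (sumEquiv n) (sumEquiv n)
        (Matrix.fromBlocks 0 M (-Mᵀ) 0))ᵀ =
      -(Matrix.reindex (sumEquiv n) (sumEquiv n) (Matrix.fromBlocks 0 M (-Mᵀ) 0))) ∧
    (Matrix.reindex (sumEquiv n) (sumEquiv n) (Matrix.fromBlocks 0 M (-Mᵀ) 0)).pff =
      (-1 : R) ^ (n * (n - 1) / 2) * M.det :=
  ⟨transpose_blockSkew M, pff_blockSkew M⟩
end

section
/- A graph G with an even number of vertices admits a perfect matching if and only if for some (equivalently, any) orientation G⃗ of G, the determinant of the weighted skew-symmetric adjacency matrix B_{G⃗}(z), viewed as a polynomial in the edge variables z_e, is nonzero. -/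
open Matrix

/-- `ε` is the sign function of an orientation (with no oriented 2-cycles) of the
multigraph with edge multiplicities `m`: it is antisymmetric, equals `±1` on
pairs joined by an edge, and `0` otherwise. -/
def IsOrientation {V : Type*} (m : V → V → ℕ) (ε : V → V → ℤ) : Prop :=
  (∀ i j, ε j i = -ε i j) ∧ (∀ i j, m i j ≠ 0 → ε i j = 1 ∨ ε i j = -1) ∧
    (∀ i j, m i j = 0 → ε i j = 0)

/-- The weighted skew-symmetric adjacency matrix `B_{G⃗}(z)`: its `(i,j)` entry is
`ε(i,j)·m(i,j)·z_{ij}`, where `z_e` is the formal variable of the edge `e` of the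
underlying simple graph. -/
noncomputable def weightedSkewAdj {V : Type*} (m : V → V → ℕ) (ε : V → V → ℤ) :
    Matrix V V (MvPolynomial (Sym2 V) ℤ) :=
  fun i j => (ε i j * (m i j : ℤ)) • MvPolynomial.X s(i, j)

/-- The number of perfect matchings of the multigraph with multiplicities `m`
(each matching of the underlying simple graph, encoded as a fixed-point-free
involution along edges, is counted with multiplicity `∏ m(e)`). -/
def matchCountW {n : ℕ} (m : Fin n → Fin n → ℕ) : ℕ :=
  ∑ f ∈ Finset.univ.filter (fun f : Fin n → Fin n =>
      (∀ i, f (f i) = i) ∧ ∀ i, f i ≠ i ∧ m i (f i) ≠ 0),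
    ∏ i ∈ Finset.univ.filter (fun i => i < f i), m i (f i)

/-!
Evaluating `B_{G⃗}(z)` at the indicator function of the edges of a perfect matching `f` gives
a monomial matrix with one nonzero entry `±m(i, f i)` in each row, hence a nonzero determinant.

Conversely, expand `det B` over permutations `σ`. Reversing the cycle of `σ` through a point of
odd period keeps the sign of `σ` and, by skew-symmetry, negates the product `∏ B (σ i) i`;
choosing that point canonically makes this an involution, so all permutations with an odd cycle
cancel (fixed points, of period `1`, give zero terms because the diagonal vanishes). A surviving
permutation with a nonzero term has only even cycles and uses only edges of `G`; taking every
other edge of each cycle yields a perfect matching.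
-/

open Equiv Equiv.Perm MulAction Finset

namespace Equiv.Perm

section

variable {α : Type*}

theorem period_dvd_sub_of_zpow_apply_eq {σ : Perm α} {y : α} {a b : ℤ}
    (h : (σ ^ a) y = (σ ^ b) y) : (period σ y : ℤ) ∣ a - b := by
  rw [← zpow_smul_eq_iff_period_dvd, Perm.smul_def, sub_eq_neg_add, _root_.zpow_add, mul_apply,
    h, ← mul_apply, ← _root_.zpow_add, neg_add_cancel, zpow_zero, one_apply]

theorem exists_alternating_coloring (σ : Perm α) (h : ∀ x : α, Even (period σ x)) :
    ∃ c : α → Bool, ∀ i, c (σ i) = !c i := by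
  -- Colour `i` by the parity of some `k` with `(σ ^ k) (r i) = i`, where `r i` represents the
  -- cycle of `i`; the parity does not depend on `k` because the cycle length is even.
  let r : α → α := fun i => (Quotient.mk (SameCycle.setoid σ) i).out
  have hr_sameCycle (i : α) : σ.SameCycle (r i) i := Quotient.mk_out (s := SameCycle.setoid σ) i
  have hr_apply (i : α) : r (σ i) = r i :=
    congrArg Quotient.out
      (Quotient.sound ⟨-1, by simp⟩ : (⟦σ i⟧ : Quotient (SameCycle.setoid σ)) = ⟦i⟧)
  choose k hk using hr_sameCycle
  refine ⟨fun i => decide (Even (k i)), fun i => ?_⟩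
  have hdvd : (period σ (r i) : ℤ) ∣ k (σ i) - (k i + 1) := by
    refine period_dvd_sub_of_zpow_apply_eq ?_
    rw [add_comm (k i), _root_.zpow_add, zpow_one, mul_apply, hk, ← hr_apply, hk]
  have hpar : Even (k (σ i) - (k i + 1)) :=
    even_iff_two_dvd.mpr (((Int.even_coe_nat _).mpr (h (r i))).two_dvd.trans hdvd)
  rw [Int.even_sub, Int.even_add_one] at hpar
  rw [← decide_not]
  exact Bool.decide_congr hpar

theorem exists_involutive_of_even_period (σ : Perm α) (h : ∀ x : α, Even (period σ x)) :
    ∃ f : α → α, Function.Involutive f ∧ ∀ i, f i ≠ i ∧ (f i = σ i ∨ σ (f i) = i) := by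
  obtain ⟨c, hc⟩ := exists_alternating_coloring σ h
  have hc_symm (i : α) : c (σ.symm i) = !c i := by
    simpa using (congrArg (!·) (hc (σ.symm i))).symm
  have hfix (i : α) : σ i ≠ i := fun hi => by
    simpa [period_eq_one_iff.mpr (by rwa [Perm.smul_def] : σ • i = i)] using h i
  refine ⟨fun i => if c i then σ i else σ⁻¹ i, fun i => ?_, fun i => ?_⟩
  · cases hi : c i <;> simp [hi, hc, hc_symm]
  · dsimp only
    cases c i
    · simp only [Bool.false_eq_true, if_false]
      exact ⟨fun hi => hfix _ ((σ.apply_symm_apply i).trans hi.symm),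
        Or.inr (σ.apply_symm_apply i)⟩
    · exact ⟨hfix i, Or.inl rfl⟩

theorem sameCycle_iff_exists_pow_apply_eq [Finite α] {f : Perm α} {a b : α} :
    f.SameCycle a b ↔ ∃ k : ℕ, (f ^ k) a = b :=
  ⟨fun h => (h.exists_pow_eq').imp fun _ => And.right, fun ⟨k, hk⟩ => ⟨k, by simpa using hk⟩⟩

variable [Fintype α] [DecidableEq α]

theorem card_sameCycle_eq_period (σ : Perm α) (x : α) :
    #{y | σ.SameCycle x y} = period σ x := by
  classical
  rw [period_eq_minimalPeriod, minimalPeriod_eq_card, ← Fintype.card_subtype]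
  refine Fintype.card_congr (Equiv.subtypeEquivRight fun y => ?_)
  simp only [mem_orbit_iff, Subtype.exists, Subgroup.mem_zpowers_iff, exists_prop,
    exists_exists_eq_and, Subgroup.mk_smul, Perm.smul_def]
  rfl

def reverseCycle (σ : Perm α) (x : α) : Perm α :=
  σ * (σ.cycleOf x)⁻¹ * (σ.cycleOf x)⁻¹

theorem reverseCycle_apply (σ : Perm α) (x y : α) :
    σ.reverseCycle x y = if σ.SameCycle x y then σ⁻¹ y else σ y := by
  simp only [reverseCycle, mul_apply, cycleOf_inv, cycleOf_apply, sameCycle_inv]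
  split_ifs with h h' <;> simp_all [sameCycle_symm_apply_right]

theorem reverseCycle_pow_apply (σ : Perm α) (x y : α) (k : ℕ) :
    (σ.reverseCycle x ^ k) y = if σ.SameCycle x y then (σ⁻¹ ^ k) y else (σ ^ k) y := by
  induction k with
  | zero => simp
  | succ k ih =>
    have hk : σ.SameCycle x ((σ⁻¹ ^ k) y) ↔ σ.SameCycle x y := by
      rw [← sameCycle_inv, sameCycle_pow_right, sameCycle_inv]
    rw [pow_succ', mul_apply, ih, pow_succ', pow_succ', reverseCycle_apply]
    split_ifs <;> simp_all [sameCycle_pow_right]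

theorem sameCycle_reverseCycle {σ : Perm α} {x a b : α} :
    (σ.reverseCycle x).SameCycle a b ↔ σ.SameCycle a b := by
  simp only [sameCycle_iff_exists_pow_apply_eq, reverseCycle_pow_apply]
  by_cases hx : σ.SameCycle x a
  · simp only [if_pos hx, ← sameCycle_iff_exists_pow_apply_eq, sameCycle_inv]
  · simp only [if_neg hx]

theorem reverseCycle_reverseCycle (σ : Perm α) (x : α) :
    (σ.reverseCycle x).reverseCycle x = σ := by
  ext y
  rw [reverseCycle_apply (σ.reverseCycle x)]
  simp only [sameCycle_reverseCycle]
  by_cases hy : σ.SameCycle x y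
  · rw [if_pos hy, Perm.inv_eq_iff_eq, reverseCycle_apply,
      if_pos (sameCycle_apply_right.mpr hy)]
    simp
  · rw [if_neg hy, reverseCycle_apply, if_neg hy]

theorem sign_reverseCycle (σ : Perm α) (x : α) : sign (σ.reverseCycle x) = sign σ := by
  rw [reverseCycle, map_mul, map_mul, mul_assoc, Int.units_mul_self, mul_one]

theorem period_reverseCycle (σ : Perm α) (x y : α) :
    period (σ.reverseCycle x) y = period σ y := by
  refine Nat.dvd_right_iff_eq.mp fun k => ?_
  rw [← pow_smul_eq_iff_period_dvd, ← pow_smul_eq_iff_period_dvd, Perm.smul_def, Perm.smul_def,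
    reverseCycle_pow_apply]
  split_ifs
  · rw [inv_pow, Perm.inv_eq_iff_eq, eq_comm]
  · rfl

theorem apply_eq_self_of_reverseCycle_eq_self {σ : Perm α} {x : α} (h : σ.reverseCycle x = σ)
    (hodd : Odd (period σ x)) : σ x = x := by
  have hinv : σ⁻¹ x = σ x := by
    simpa [reverseCycle_apply, SameCycle.refl] using congrArg (· x) h
  have h2 : (σ ^ 2) • x = x := by
    rw [Perm.smul_def, sq, mul_apply, ← hinv]
    exact σ.apply_symm_apply x
  rcases (Nat.dvd_prime Nat.prime_two).mp (pow_smul_eq_iff_period_dvd.mp h2) with h1 | h1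
  · simpa [Perm.smul_def] using period_eq_one_iff.mp h1
  · rw [h1] at hodd
    exact absurd hodd (by decide)

/-- The chosen point depends only on `period σ`, which `reverseCycle` preserves, so this is an
involution. -/
noncomputable def reverseOddCycle (σ : Perm α) : Perm α :=
  if h : ∃ x : α, Odd (period σ x) then σ.reverseCycle h.choose else σ

theorem period_reverseOddCycle (σ : Perm α) :
    (period σ.reverseOddCycle : α → ℕ) = period σ := by
  funext y
  unfold reverseOddCycle
  split_ifs
  exacts [period_reverseCycle σ _ y, rfl]

theorem reverseOddCycle_reverseOddCycle (σ : Perm α) :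
    σ.reverseOddCycle.reverseOddCycle = σ := by
  by_cases h : ∃ x : α, Odd (period σ x)
  · rw [reverseOddCycle, period_reverseOddCycle, dif_pos h, reverseOddCycle, dif_pos h,
      reverseCycle_reverseCycle]
  · rw [reverseOddCycle, period_reverseOddCycle, dif_neg h, reverseOddCycle, dif_neg h]

end

end Equiv.Perm

namespace Matrix

variable {n R : Type*} [Fintype n] [DecidableEq n] [CommRing R]

theorem prod_reverseCycle_of_skew {M : Matrix n n R} (hM : ∀ i j, M j i = -M i j)
    (σ : Perm n) (x : n) :
    ∏ i, M (σ.reverseCycle x i) i = (-1) ^ period σ x * ∏ i, M (σ i) i := by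
  set T : Finset n := {y | σ.SameCycle x y}
  have hT (y : n) : y ∈ T ↔ σ y ∈ T := by simp [T, sameCycle_apply_right]
  have on_cycle : ∏ i ∈ T, M (σ.reverseCycle x i) i = (-1) ^ #T * ∏ i ∈ T, M (σ i) i :=
    calc ∏ i ∈ T, M (σ.reverseCycle x i) i
      _ = ∏ i ∈ T, M (σ⁻¹ i) i :=
        prod_congr rfl fun i hi => by rw [reverseCycle_apply, if_pos (mem_filter.1 hi).2]
      _ = ∏ j ∈ T, M j (σ j) := (prod_equiv σ hT fun j _ => by simp).symm
      _ = ∏ j ∈ T, (-1) * M (σ j) j := prod_congr rfl fun j _ => by rw [hM, neg_one_mul]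
      _ = (-1) ^ #T * ∏ i ∈ T, M (σ i) i := by rw [prod_mul_distrib, prod_const]
  have off_cycle : ∏ i ∈ univ.filter (¬σ.SameCycle x ·), M (σ.reverseCycle x i) i =
      ∏ i ∈ univ.filter (¬σ.SameCycle x ·), M (σ i) i :=
    prod_congr rfl fun i hi => by rw [reverseCycle_apply, if_neg (mem_filter.1 hi).2]
  rw [← prod_filter_mul_prod_filter_not univ (σ.SameCycle x), on_cycle, off_cycle,
    card_sameCycle_eq_period, mul_assoc, prod_filter_mul_prod_filter_not]

theorem sum_exists_odd_period_eq_zero_of_skew {M : Matrix n n R} (hM : ∀ i j, M j i = -M i j)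
    (hdiag : ∀ i, M i i = 0) :
    ∑ σ ∈ univ.filter (fun σ : Perm n => ∃ x : n, Odd (period σ x)),
      sign σ • ∏ i, M (σ i) i = 0 := by
  refine sum_involution (fun σ _ => σ.reverseOddCycle) (fun σ hσ => ?_) (fun σ hσ hne => ?_)
    (fun σ hσ => ?_) (fun σ _ => reverseOddCycle_reverseOddCycle σ)
  all_goals replace hσ := (mem_filter.1 hσ).2
  · rw [reverseOddCycle, dif_pos hσ, sign_reverseCycle, prod_reverseCycle_of_skew hM,
      hσ.choose_spec.neg_one_pow, neg_one_mul, smul_neg, add_neg_cancel]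
  · intro heq
    rw [reverseOddCycle, dif_pos hσ] at heq
    have hfix := apply_eq_self_of_reverseCycle_eq_self heq hσ.choose_spec
    exact hne (by rw [prod_eq_zero (mem_univ _) (by rw [hfix, hdiag]), smul_zero])
  · simpa [period_reverseOddCycle] using hσ

theorem det_eq_sum_even_period_of_skew {M : Matrix n n R} (hM : ∀ i j, M j i = -M i j)
    (hdiag : ∀ i, M i i = 0) :
    M.det = ∑ σ ∈ univ.filter (fun σ : Perm n => ∀ x : n, Even (period σ x)),
      sign σ • ∏ i, M (σ i) i := by
  rw [det_apply,
    ← sum_filter_add_sum_filter_not univ (fun σ : Perm n => ∃ x : n, Odd (period σ x)),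
    sum_exists_odd_period_eq_zero_of_skew hM hdiag, zero_add]
  simp only [not_exists, Nat.not_odd_iff_even]

end Matrix

def IsPerfectMatching {V : Type*} (m : V → V → ℕ) (f : V → V) : Prop :=
  Function.Involutive f ∧ ∀ i, f i ≠ i ∧ m i (f i) ≠ 0

section

variable {V : Type*} {m : V → V → ℕ} {ε : V → V → ℤ}

theorem IsOrientation.apply_self (hε : IsOrientation m ε) (i : V) : ε i i = 0 := by
  have := hε.1 i i
  omega

theorem IsOrientation.ne_zero (hε : IsOrientation m ε) {i j : V} (h : m i j ≠ 0) :
    ε i j ≠ 0 := by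
  rcases hε.2.1 i j h with h | h <;> simp [h]

theorem exists_isOrientation [LinearOrder V] (hloop : ∀ i, m i i = 0)
    (hsym : ∀ i j, m i j = m j i) : ∃ ε, IsOrientation m ε := by
  refine ⟨fun i j => if m i j = 0 then 0 else if i < j then 1 else -1, fun i j => ?_,
    fun i j h => by simp only [if_neg h]; split_ifs <;> simp, fun i j h => if_pos h⟩
  dsimp only
  rw [hsym j i]
  split_ifs with h0 hji hij hij <;> try simp
  · exact absurd hji hij.not_gt
  · exact h0 (le_antisymm (not_lt.1 hji) (not_lt.1 hij) ▸ hloop i)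

theorem weightedSkewAdj_skew (hε : IsOrientation m ε) (hsym : ∀ i j, m i j = m j i) (i j : V) :
    weightedSkewAdj m ε j i = -weightedSkewAdj m ε i j := by
  rw [weightedSkewAdj, weightedSkewAdj, hε.1 i j, hsym j i, Sym2.eq_swap, neg_mul, neg_smul]

theorem weightedSkewAdj_apply_self (hε : IsOrientation m ε) (i : V) :
    weightedSkewAdj m ε i i = 0 := by
  simp [weightedSkewAdj, hε.apply_self]

variable [Fintype V] [DecidableEq V]

theorem exists_isPerfectMatching_of_det_ne_zero (hε : IsOrientation m ε)
    (hsym : ∀ i j, m i j = m j i) (hdet : (weightedSkewAdj m ε).det ≠ 0) :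
    ∃ f, IsPerfectMatching m f := by
  rw [det_eq_sum_even_period_of_skew (weightedSkewAdj_skew hε hsym)
    (weightedSkewAdj_apply_self hε)] at hdet
  obtain ⟨σ, hσ, hterm⟩ := exists_ne_zero_of_sum_ne_zero hdet
  have hm (i : V) : m (σ i) i ≠ 0 := fun hi =>
    hterm (by rw [prod_eq_zero (mem_univ i) (by simp [weightedSkewAdj, hi]), smul_zero])
  obtain ⟨f, hf, hfσ⟩ := exists_involutive_of_even_period σ (mem_filter.1 hσ).2
  refine ⟨f, hf, fun i => ⟨(hfσ i).1, ?_⟩⟩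
  rcases (hfσ i).2 with h | h
  · rw [h, hsym]
    exact hm i
  · simpa [h] using hm (f i)

theorem det_weightedSkewAdj_ne_zero (hε : IsOrientation m ε) {f : V → V}
    (hf : IsPerfectMatching m f) : (weightedSkewAdj m ε).det ≠ 0 := by
  have hf_eq (i j : V) : i = f j ↔ j = f i := eq_comm.trans hf.1.eq_iff
  let v : Sym2 V → ℤ := Sym2.lift ⟨fun i j => if j = f i then 1 else 0, fun i j => by
    simp only [hf_eq j i]⟩
  have hv : (weightedSkewAdj m ε).map (MvPolynomial.eval v) =
      (diagonal fun i => ε i (f i) * m i (f i)).submatrix id hf.1.toPerm := by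
    ext i j
    by_cases h : j = f i
    · subst h
      simp [weightedSkewAdj, v, hf.1 i]
    · simp [weightedSkewAdj, v, h, mt (hf_eq i j).mp h]
  intro hdet
  have := congrArg (MvPolynomial.eval v) hdet
  rw [RingHom.map_det, RingHom.mapMatrix_apply, hv, det_permute', det_diagonal, map_zero] at this
  refine mul_ne_zero (Units.ne_zero _) (prod_ne_zero_iff.2 fun i _ => ?_) this
  exact mul_ne_zero (hε.ne_zero (hf.2 i).2) (by exact_mod_cast (hf.2 i).2)

end

theorem matching_iff_det_ne_zero_general (n : ℕ)
    (m : Fin n → Fin n → ℕ) (hloop : ∀ i, m i i = 0) (hsym : ∀ i j, m i j = m j i) :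
    ((∃ f : Fin n → Fin n, (∀ i, f (f i) = i) ∧ ∀ i, f i ≠ i ∧ m i (f i) ≠ 0) ↔
      ∃ ε, IsOrientation m ε ∧ (weightedSkewAdj m ε).det ≠ 0) ∧
    ((∃ f : Fin n → Fin n, (∀ i, f (f i) = i) ∧ ∀ i, f i ≠ i ∧ m i (f i) ≠ 0) ↔
      ∀ ε, IsOrientation m ε → (weightedSkewAdj m ε).det ≠ 0) := by
  obtain ⟨ε₀, hε₀⟩ := exists_isOrientation hloop hsym
  refine ⟨⟨fun ⟨_, hf⟩ => ⟨ε₀, hε₀, det_weightedSkewAdj_ne_zero hε₀ hf⟩, ?_⟩,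
    ⟨fun ⟨_, hf⟩ ε hε => det_weightedSkewAdj_ne_zero hε hf, ?_⟩⟩
  · rintro ⟨ε, hε, hdet⟩
    exact exists_isPerfectMatching_of_det_ne_zero hε hsym hdet
  · exact fun h => exists_isPerfectMatching_of_det_ne_zero hε₀ hsym (h ε₀ hε₀)

/-- A graph with an even number of vertices admits a perfect matching iff for some
(equivalently, any) orientation, the determinant of the weighted skew-symmetric
adjacency matrix is a nonzero polynomial in the edge variables. -/
theorem matching_iff_det_ne_zero (n : ℕ) (hn : Even n)
    (m : Fin n → Fin n → ℕ) (hloop : ∀ i, m i i = 0) (hsym : ∀ i j, m i j = m j i) :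
    ((∃ f : Fin n → Fin n, (∀ i, f (f i) = i) ∧ ∀ i, f i ≠ i ∧ m i (f i) ≠ 0) ↔
      ∃ ε, IsOrientation m ε ∧ (weightedSkewAdj m ε).det ≠ 0) ∧
    ((∃ f : Fin n → Fin n, (∀ i, f (f i) = i) ∧ ∀ i, f i ≠ i ∧ m i (f i) ≠ 0) ↔
      ∀ ε, IsOrientation m ε → (weightedSkewAdj m ε).det ≠ 0) :=
  matching_iff_det_ne_zero_general n m hloop hsym
end

section
/- Let G be an even graph with a Pfaffian orientation G⃗. Then pff(B_{G⃗}(z)) = ± φ_G, i.e., the Pfaffian of the weighted adjacency matrix equals plus or minus the matching generating polynomial of G. -/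
open Matrix

/-- The matching generating polynomial `φ_G` of the multigraph with multiplicities `m`:
the sum over perfect matchings of the underlying simple graph of
`(∏ m(e)) · ∏ z_e`, which counts matchings of the multigraph. -/
noncomputable def matchPolyW {n : ℕ} (m : Fin n → Fin n → ℕ) :
    MvPolynomial (Sym2 (Fin n)) ℤ :=
  ∑ f ∈ Finset.univ.filter (fun f : Fin n → Fin n =>
      (∀ i, f (f i) = i) ∧ ∀ i, f i ≠ i ∧ m i (f i) ≠ 0),
    (∏ i ∈ Finset.univ.filter (fun i => i < f i), (m i (f i) : ℤ)) •
      ∏ i ∈ Finset.univ.filter (fun i => i < f i), MvPolynomial.X s(i, f i)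

/-! Pair-normal permutations of `Fin (2k)` correspond bijectively to perfect matchings of the
complete graph on `Fin (2k)`, so the Pfaffian of any matrix supported on the edges of `G` is a sum
over the perfect matchings `M` of `G` of `± ∏_{e ∈ M} a_e`. For `B(z)` the term of `M` is
`s(M) · ∏_{e ∈ M} m(e) z_e` for one sign `s(M) = ±1`, and for `B(1)` it is `s(M) · ∏_{e ∈ M} m(e)`.
The weights `∏ m(e)` are positive and add up to `Φ(G)`, so `|pff B(1)| = Φ(G)` forces all signs
`s(M)` to agree, and then `pff B(z) = ±φ_G`. -/

open Finset Function

theorem Function.Involutive.two_mul_card_filter_lt_self {α : Type*} [Fintype α] [LinearOrder α]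
    {f : α → α} (hf : Involutive f) (hne : ∀ x, f x ≠ x) :
    2 * #{x | x < f x} = Fintype.card α := by
  have hswap : #{x | x < f x} = #{x | f x < x} :=
    card_nbij' f f (fun x hx => by simpa [hf x] using hx) (fun x hx => by simpa [hf x] using hx)
      (fun x _ => hf x) (fun x _ => hf x)
  have hcompl : #{x | ¬ x < f x} = #{x | f x < x} := by
    congr 1
    exact filter_congr fun x _ => by simpa [not_lt] using (hne x).le_iff_lt
  rw [← card_univ, ← card_filter_add_card_filter_not (s := univ) (fun x => x < f x), hcompl,
    ← hswap, two_mul]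

section PairIndexing

variable {k : ℕ}

def pairIdx (j : Fin (2 * k)) : Fin k := ⟨j / 2, by omega⟩

@[simp] lemma pairIdx_pairFst (l : Fin k) : pairIdx (pairFst l) = l := by
  ext; simp [pairIdx, pairFst]

@[simp] lemma pairIdx_pairSnd (l : Fin k) : pairIdx (pairSnd l) = l := by
  ext; simp [pairIdx, pairSnd]; omega

lemma pairFst_ne_pairSnd (l l' : Fin k) : pairFst l ≠ pairSnd l' := by
  simp [pairFst, pairSnd, Fin.ext_iff]; omega

lemma eq_pairFst_or_eq_pairSnd (j : Fin (2 * k)) :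
    j = pairFst (pairIdx j) ∨ j = pairSnd (pairIdx j) := by
  simp only [pairFst, pairSnd, pairIdx, Fin.ext_iff]; omega

@[elab_as_elim]
lemma pair_induction {motive : Fin (2 * k) → Prop} (fst : ∀ l, motive (pairFst l))
    (snd : ∀ l, motive (pairSnd l)) (j : Fin (2 * k)) : motive j := by
  rcases eq_pairFst_or_eq_pairSnd j with h | h <;> rw [h]
  exacts [fst _, snd _]

def pairCases {α : Type*} (a b : Fin k → α) (j : Fin (2 * k)) : α :=
  if j = pairFst (pairIdx j) then a (pairIdx j) else b (pairIdx j)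

@[simp] lemma pairCases_pairFst {α : Type*} (a b : Fin k → α) (l : Fin k) :
    pairCases a b (pairFst l) = a l := by
  simp [pairCases]

@[simp] lemma pairCases_pairSnd {α : Type*} (a b : Fin k → α) (l : Fin k) :
    pairCases a b (pairSnd l) = b l := by
  simp [pairCases, (pairFst_ne_pairSnd l l).symm]

end PairIndexing

section PairMatching

variable {k : ℕ}

def pairSwap : Fin (2 * k) → Fin (2 * k) := pairCases pairSnd pairFst

@[simp] lemma pairSwap_pairFst (l : Fin k) : pairSwap (pairFst l) = pairSnd l :=
  pairCases_pairFst _ _ l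

@[simp] lemma pairSwap_pairSnd (l : Fin k) : pairSwap (pairSnd l) = pairFst l :=
  pairCases_pairSnd _ _ l

lemma pairSwap_involutive : Involutive (pairSwap (k := k)) := by
  intro j
  induction j using pair_induction <;> simp

lemma pairSwap_ne (j : Fin (2 * k)) : pairSwap j ≠ j := by
  induction j using pair_induction with
  | fst l => simpa using (pairFst_ne_pairSnd l l).symm
  | snd l => simpa using pairFst_ne_pairSnd l l

/-- The perfect matching pairing `σ (2l)` with `σ (2l+1)` for every `l`. -/
def pairMatching (σ : Equiv.Perm (Fin (2 * k))) (i : Fin (2 * k)) : Fin (2 * k) :=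
  σ (pairSwap (σ.symm i))

lemma pairMatching_apply_apply (σ : Equiv.Perm (Fin (2 * k))) (j : Fin (2 * k)) :
    pairMatching σ (σ j) = σ (pairSwap j) := by
  simp [pairMatching]

lemma pairMatching_involutive (σ : Equiv.Perm (Fin (2 * k))) : Involutive (pairMatching σ) := by
  intro i
  simp [pairMatching, pairSwap_involutive _]

lemma pairMatching_ne (σ : Equiv.Perm (Fin (2 * k))) (i : Fin (2 * k)) :
    pairMatching σ i ≠ i := by
  simpa [pairMatching, ← σ.eq_symm_apply] using pairSwap_ne (σ.symm i)

end PairMatching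

section PairNormalPerm

variable {k : ℕ} {f : Fin (2 * k) → Fin (2 * k)}

lemma card_filter_lt_apply (hf : Involutive f) (hne : ∀ i, f i ≠ i) : #{i | i < f i} = k := by
  have := hf.two_mul_card_filter_lt_self hne
  rw [Fintype.card_fin] at this
  omega

noncomputable def lowerEnum (hf : Involutive f) (hne : ∀ i, f i ≠ i) : Fin k ↪o Fin (2 * k) :=
  orderEmbOfFin _ (card_filter_lt_apply hf hne)

lemma lowerEnum_lt (hf : Involutive f) (hne : ∀ i, f i ≠ i) (l : Fin k) :
    lowerEnum hf hne l < f (lowerEnum hf hne l) :=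
  (mem_filter.1 (orderEmbOfFin_mem _ (card_filter_lt_apply hf hne) l)).2

lemma prod_filter_lt_apply {M : Type*} [CommMonoid M] (hf : Involutive f) (hne : ∀ i, f i ≠ i)
    (g : Fin (2 * k) → M) : ∏ i ∈ {i | i < f i}, g i = ∏ l, g (lowerEnum hf hne l) := by
  rw [← map_orderEmbOfFin_univ _ (card_filter_lt_apply hf hne), prod_map]
  rfl

lemma pairCases_lowerEnum_injective (hf : Involutive f) (hne : ∀ i, f i ≠ i) :
    Injective (pairCases (lowerEnum hf hne) (f ∘ lowerEnum hf hne)) := by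
  have cross : ∀ l l', lowerEnum hf hne l ≠ f (lowerEnum hf hne l') := by
    intro l l' h
    have h' : f (lowerEnum hf hne l) = lowerEnum hf hne l' := by rw [h, hf]
    exact (lowerEnum_lt hf hne l).not_gt (h' ▸ h ▸ lowerEnum_lt hf hne l')
  intro a b hab
  induction a using pair_induction <;> induction b using pair_induction <;>
    simp only [pairCases_pairFst, pairCases_pairSnd, Function.comp_apply] at hab
  · rw [(lowerEnum hf hne).injective hab]
  · exact absurd hab (cross _ _)
  · exact absurd hab.symm (cross _ _)
  · rw [(lowerEnum hf hne).injective (hf.injective hab)]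

/-- Inverse of `pairMatching` on pair-normal permutations: `2l` goes to the `l`-th smallest
`i` with `i < f i`, and `2l+1` to its partner `f i`. Junk value `1` when `f` is not a
fixed-point-free involution. -/
noncomputable def pairNormalPerm (f : Fin (2 * k) → Fin (2 * k)) : Equiv.Perm (Fin (2 * k)) :=
  if h : (∀ i, f (f i) = i) ∧ ∀ i, f i ≠ i then
    Equiv.ofBijective _ (pairCases_lowerEnum_injective h.1 h.2).bijective_of_finite
  else 1

lemma pairNormalPerm_pairFst (hf : Involutive f) (hne : ∀ i, f i ≠ i) (l : Fin k) :
    pairNormalPerm f (pairFst l) = lowerEnum hf hne l := by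
  rw [pairNormalPerm, dif_pos (show (∀ i, f (f i) = i) ∧ _ from ⟨hf, hne⟩),
    Equiv.ofBijective_apply, pairCases_pairFst]

lemma pairNormalPerm_pairSnd (hf : Involutive f) (hne : ∀ i, f i ≠ i) (l : Fin k) :
    pairNormalPerm f (pairSnd l) = f (lowerEnum hf hne l) := by
  rw [pairNormalPerm, dif_pos (show (∀ i, f (f i) = i) ∧ _ from ⟨hf, hne⟩),
    Equiv.ofBijective_apply, pairCases_pairSnd, Function.comp_apply]

lemma isPairNormal_pairNormalPerm (hf : Involutive f) (hne : ∀ i, f i ≠ i) :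
    IsPairNormal (pairNormalPerm f) := by
  refine ⟨fun l => ?_, fun l l' hll' => ?_⟩
  · simpa [pairNormalPerm_pairFst hf hne, pairNormalPerm_pairSnd hf hne] using
      lowerEnum_lt hf hne l
  · simpa [pairNormalPerm_pairFst hf hne] using hll'

lemma pairMatching_pairNormalPerm (hf : Involutive f) (hne : ∀ i, f i ≠ i) :
    pairMatching (pairNormalPerm f) = f := by
  funext i
  obtain ⟨j, rfl⟩ := (pairNormalPerm f).surjective i
  rw [pairMatching_apply_apply]
  induction j using pair_induction <;>
    simp [pairNormalPerm_pairFst hf hne, pairNormalPerm_pairSnd hf hne, hf _]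

lemma lowerEnum_pairMatching {σ : Equiv.Perm (Fin (2 * k))} (hσ : IsPairNormal σ) (l : Fin k) :
    lowerEnum (pairMatching_involutive σ) (pairMatching_ne σ) l = σ (pairFst l) := by
  refine congrFun (orderEmbOfFin_unique _ (fun l => ?_) (fun l l' h => hσ.2 l l' h)).symm l
  simpa [pairMatching_apply_apply] using hσ.1 l

lemma pairNormalPerm_pairMatching {σ : Equiv.Perm (Fin (2 * k))} (hσ : IsPairNormal σ) :
    pairNormalPerm (pairMatching σ) = σ := by
  have hf := pairMatching_involutive σ
  have hne := pairMatching_ne σ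
  ext j
  induction j using pair_induction with
  | fst l => rw [pairNormalPerm_pairFst hf hne, lowerEnum_pairMatching hσ]
  | snd l => rw [pairNormalPerm_pairSnd hf hne, lowerEnum_pairMatching hσ,
      pairMatching_apply_apply, pairSwap_pairFst]

end PairNormalPerm

theorem pff_eq_sum_involutions {R : Type*} [CommRing R] {k : ℕ}
    (A : Matrix (Fin (2 * k)) (Fin (2 * k)) R) :
    A.pff = ∑ f ∈ ({f | (∀ i, f (f i) = i) ∧ ∀ i, f i ≠ i} : Finset (Fin (2 * k) → Fin (2 * k))),
      (Equiv.Perm.sign (pairNormalPerm f) : ℤ) • ∏ i ∈ {i | i < f i}, A i (f i) := by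
  refine sum_bij' (fun σ _ => pairMatching σ) (fun f _ => pairNormalPerm f) ?_ ?_ ?_ ?_ ?_
  · intro σ _
    simpa using ⟨pairMatching_involutive σ, pairMatching_ne σ⟩
  · intro f hf
    simp only [mem_filter, mem_univ, true_and] at hf ⊢
    exact isPairNormal_pairNormalPerm hf.1 hf.2
  · intro σ hσ
    exact pairNormalPerm_pairMatching (mem_filter.1 hσ).2
  · intro f hf
    exact pairMatching_pairNormalPerm (mem_filter.1 hf).2.1 (mem_filter.1 hf).2.2
  · intro σ hσ
    have hσ := (mem_filter.1 hσ).2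
    rw [pairNormalPerm_pairMatching hσ,
      prod_filter_lt_apply (pairMatching_involutive σ) (pairMatching_ne σ)]
    simp only [lowerEnum_pairMatching hσ, pairMatching_apply_apply, pairSwap_pairFst]

def perfectMatchings {n : ℕ} (m : Fin n → Fin n → ℕ) : Finset (Fin n → Fin n) :=
  univ.filter fun f => (∀ i, f (f i) = i) ∧ ∀ i, f i ≠ i ∧ m i (f i) ≠ 0

theorem pff_eq_sum_perfectMatchings {R : Type*} [CommRing R] {k : ℕ}
    (m : Fin (2 * k) → Fin (2 * k) → ℕ) (hm : ∀ i j, m i j = 0 → m j i = 0)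
    (A : Matrix (Fin (2 * k)) (Fin (2 * k)) R) (hA : ∀ i j, m i j = 0 → A i j = 0) :
    A.pff = ∑ f ∈ perfectMatchings m,
      (Equiv.Perm.sign (pairNormalPerm f) : ℤ) • ∏ i ∈ {i | i < f i}, A i (f i) := by
  rw [pff_eq_sum_involutions]
  refine (sum_subset (fun f hf => ?_) fun f hf hfm => ?_).symm
  · simp only [perfectMatchings, mem_filter, mem_univ, true_and] at hf ⊢
    exact ⟨hf.1, fun i => (hf.2 i).1⟩
  · simp only [perfectMatchings, mem_filter, mem_univ, true_and, not_and, not_forall] at hf hfm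
    obtain ⟨i, hi⟩ := hfm hf.1
    have hi : m i (f i) = 0 := by simpa [hf.2 i] using hi
    obtain ⟨j, hj, hj0⟩ : ∃ j, j < f j ∧ m j (f j) = 0 := by
      rcases lt_or_gt_of_ne (hf.2 i).symm with h | h
      · exact ⟨i, h, hi⟩
      · exact ⟨f i, by rwa [hf.1 i], by rw [hf.1 i]; exact hm _ _ hi⟩
    rw [prod_eq_zero (mem_filter.2 ⟨mem_univ j, hj⟩) (hA j (f j) hj0), smul_zero]

theorem Finset.forall_eq_one_of_sum_mul_eq_sum {ι R : Type*} [CommRing R] [LinearOrder R]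
    [IsStrictOrderedRing R] {s : Finset ι} {d w : ι → R} (hd : ∀ i ∈ s, d i ≤ 1)
    (hw : ∀ i ∈ s, 0 < w i) (h : ∑ i ∈ s, d i * w i = ∑ i ∈ s, w i) : ∀ i ∈ s, d i = 1 := by
  have hdefect : ∑ i ∈ s, (1 - d i) * w i = 0 := by
    simp only [sub_mul, one_mul, sum_sub_distrib, h, sub_self]
  intro i hi
  have := (sum_eq_zero_iff_of_nonneg fun j hj =>
    mul_nonneg (sub_nonneg.2 (hd j hj)) (hw j hj).le).1 hdefect i hi
  rcases mul_eq_zero.1 this with h1 | h1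
  · linarith
  · exact absurd h1 (hw i hi).ne'

namespace IsOrientation

variable {V : Type*} {m : V → V → ℕ} {ε : V → V → ℤ}

lemma abs_le_one (hε : IsOrientation m ε) (i j : V) : |ε i j| ≤ 1 := by
  by_cases h : m i j = 0
  · simp [hε.2.2 i j h]
  · rcases hε.2.1 i j h with h | h <;> simp [h]

lemma eq_zero_symm (hε : IsOrientation m ε) {i j : V} (h : m i j = 0) : m j i = 0 := by
  by_contra h'
  have hji : ε j i = 0 := by rw [hε.1, hε.2.2 i j h, neg_zero]
  rcases hε.2.1 j i h' with h'' | h'' <;> simp [hji] at h''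

end IsOrientation

section MatchingSign

variable {k : ℕ} {m : Fin (2 * k) → Fin (2 * k) → ℕ} {ε : Fin (2 * k) → Fin (2 * k) → ℤ}

noncomputable def matchingSign (ε : Fin (2 * k) → Fin (2 * k) → ℤ)
    (f : Fin (2 * k) → Fin (2 * k)) : ℤ :=
  Equiv.Perm.sign (pairNormalPerm f) * ∏ i ∈ {i | i < f i}, ε i (f i)

lemma IsOrientation.abs_matchingSign_le_one (hε : IsOrientation m ε)
    (f : Fin (2 * k) → Fin (2 * k)) : |matchingSign ε f| ≤ 1 := by
  rw [matchingSign, abs_mul, abs_prod, Equiv.Perm.sign_abs, one_mul]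
  exact prod_le_one (fun _ _ => abs_nonneg _) fun i _ => hε.abs_le_one _ _

lemma pff_skewAdj_eq (hε : IsOrientation m ε) :
    Matrix.pff (fun i j => ε i j * (m i j : ℤ)) =
      ∑ f ∈ perfectMatchings m, matchingSign ε f * ∏ i ∈ {i | i < f i}, (m i (f i) : ℤ) := by
  refine (pff_eq_sum_perfectMatchings m (fun _ _ => hε.eq_zero_symm) _
    fun i j h => by simp [h]).trans (sum_congr rfl fun f _ => ?_)
  rw [matchingSign, prod_mul_distrib, smul_eq_mul, mul_assoc]

lemma pff_weightedSkewAdj_eq (hε : IsOrientation m ε) :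
    (weightedSkewAdj m ε).pff = ∑ f ∈ perfectMatchings m, matchingSign ε f •
      (∏ i ∈ {i | i < f i}, (m i (f i) : ℤ)) • ∏ i ∈ {i | i < f i}, MvPolynomial.X s(i, f i) := by
  rw [pff_eq_sum_perfectMatchings m (fun _ _ => hε.eq_zero_symm) _
    fun i j h => by simp [weightedSkewAdj, h]]
  refine sum_congr rfl fun f _ => ?_
  simp only [weightedSkewAdj, matchingSign, zsmul_eq_mul, Int.cast_mul, Int.cast_prod,
    prod_mul_distrib]
  ring

theorem matchingSign_const_of_pfaffian (hε : IsOrientation m ε)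
    (hpfaff : |Matrix.pff (fun i j => ε i j * (m i j : ℤ))| = (matchCountW m : ℤ)) :
    (∀ f ∈ perfectMatchings m, matchingSign ε f = 1) ∨
      ∀ f ∈ perfectMatchings m, matchingSign ε f = -1 := by
  have hw : ∀ f ∈ perfectMatchings m, 0 < ∏ i ∈ {i | i < f i}, (m i (f i) : ℤ) := by
    intro f hf
    exact prod_pos fun i _ => by simpa [Nat.pos_iff_ne_zero] using ((mem_filter.1 hf).2.2 i).2
  have hcount : (matchCountW m : ℤ) =
      ∑ f ∈ perfectMatchings m, ∏ i ∈ {i | i < f i}, (m i (f i) : ℤ) := by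
    simp [matchCountW, perfectMatchings]
  rw [pff_skewAdj_eq hε, hcount] at hpfaff
  rcases (abs_eq (sum_nonneg fun f hf => (hw f hf).le)).1 hpfaff with h | h
  · exact .inl <| forall_eq_one_of_sum_mul_eq_sum
      (fun f _ => (le_abs_self _).trans (hε.abs_matchingSign_le_one f)) hw h
  · refine .inr fun f hf => neg_eq_iff_eq_neg.1 <| forall_eq_one_of_sum_mul_eq_sum
      (fun f _ => (neg_le_abs _).trans (hε.abs_matchingSign_le_one f)) hw ?_ f hf
    simp only [neg_mul, sum_neg_distrib, h, neg_neg]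

end MatchingSign

theorem pff_eq_pm_matchPoly_of_pfaffian_orientation_general (k : ℕ)
    (m : Fin (2 * k) → Fin (2 * k) → ℕ) (ε : Fin (2 * k) → Fin (2 * k) → ℤ)
    (hε : IsOrientation m ε)
    (hpfaff : |Matrix.pff (fun i j => ε i j * (m i j : ℤ))| = (matchCountW m : ℤ)) :
    (weightedSkewAdj m ε).pff = matchPolyW m ∨ (weightedSkewAdj m ε).pff = -matchPolyW m := by
  rw [pff_weightedSkewAdj_eq hε]
  rcases matchingSign_const_of_pfaffian hε hpfaff with h | h
  · exact .inl <| sum_congr rfl fun f hf => by rw [h f hf, one_smul]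
  · refine .inr <| (sum_congr rfl fun f hf => ?_).trans (sum_neg_distrib _)
    rw [h f hf, neg_one_smul]

/-- For an even graph with a Pfaffian orientation (one for which `|pff(B(1))|` equals the
number of perfect matchings), the Pfaffian of the weighted adjacency matrix equals plus or
minus the matching generating polynomial. -/
theorem pff_eq_pm_matchPoly_of_pfaffian_orientation (k : ℕ)
    (m : Fin (2 * k) → Fin (2 * k) → ℕ) (ε : Fin (2 * k) → Fin (2 * k) → ℤ)
    (hloop : ∀ i, m i i = 0) (hsym : ∀ i j, m i j = m j i)
    (hε : IsOrientation m ε)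
    (hpfaff : |Matrix.pff (fun i j => ε i j * (m i j : ℤ))| = (matchCountW m : ℤ)) :
    (weightedSkewAdj m ε).pff = matchPolyW m ∨ (weightedSkewAdj m ε).pff = -matchPolyW m :=
  pff_eq_pm_matchPoly_of_pfaffian_orientation_general k m ε hε hpfaff
end
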